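/- Let d ≥ 2 be an integer and let K, L, M, N be Hermitian matrices on ℂ^{d_Â}⊗ℂ^{d_B̂}. On the space with tensor factors A, B, Â, B̂, A', B' (A, B, A', B' each of dimension d), define P := Γ_{AB'}⊗Γ_{BA'}⊗K + Γ_{AB'}⊗((d·I−Γ)_{BA'}/(d²−1))⊗L + ((d·I−Γ)_{AB'}/(d²−1))⊗Γ_{BA'}⊗M + ((d·I−Γ)_{AB'}/(d²−1))⊗((d·I−Γ)_{BA'}/(d²−1))⊗N, where Γ_{AB'} denotes the unnormalized maximally entangled operator placed on the factors A and B', and Γ_{BA'} that placed on B and A'. Then T_{BB̂B'}(P) is positive semidefinite if and only if the following four conditions hold: T_B̂(K + L/(d+1) + M/(d+1) + N/(d+1)²) ≥ 0; (1/(d−1))·T_B̂(L + N/(d+1)) ≥ T_B̂(K + M/(d+1)); (1/(d−1))·T_B̂(M + N/(d+1)) ≥ T_B̂(K + L/(d+1)); and T_B̂(K + N/(d−1)²) ≥ (1/(d−1))·T_B̂(L + M). -/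

import Mathlib

open Matrix Kronecker
open scoped ComplexOrder

noncomputable section

/-- Square root of a positive semidefinite matrix, as `PosSemidef.sqrt` was defined in the older Mathlib. -/
def psdSqrt {n : Type*} [Fintype n] [DecidableEq n] {A : Matrix n n ℂ} (hA : A.PosSemidef) :
    Matrix n n ℂ :=
  (hA.1.eigenvectorUnitary : Matrix n n ℂ) *
    diagonal ((↑) ∘ Real.sqrt ∘ hA.1.eigenvalues) * (star hA.1.eigenvectorUnitary : Matrix n n ℂ)

/-- The trace norm `‖X‖₁ = Tr[√(X†X)]`. -/
def traceNorm {n : Type*} [Fintype n] [DecidableEq n] (X : Matrix n n ℂ) : ℝ :=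
  ((psdSqrt (Matrix.posSemidef_conjTranspose_mul_self X)).trace).re

/-- The extension `id_k ⊗ Φ` of a map on matrices, with the identity on the first factor. -/
def idTensor {k n m : Type*} (Φ : Matrix n n ℂ → Matrix m m ℂ)
    (M : Matrix (k × n) (k × n) ℂ) : Matrix (k × m) (k × m) ℂ :=
  Matrix.of fun p q => Φ (Matrix.of fun a b => M (p.1, a) (q.1, b)) p.2 q.2

/-- A density matrix: positive semidefinite with unit trace. -/
def IsState {n : Type*} [Fintype n] (ρ : Matrix n n ℂ) : Prop :=
  ρ.PosSemidef ∧ ρ.trace = 1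

/-- Normalized diamond distance between two maps on matrices, as the supremum over
bipartite input states (with a reference system of the same dimension as the input)
of the normalized trace distance of the outputs. -/
def dDist {n m : Type*} [Fintype n] [DecidableEq n] [Fintype m] [DecidableEq m]
    (N M : Matrix n n ℂ → Matrix m m ℂ) : ℝ :=
  sSup {x : ℝ | ∃ ρ : Matrix (n × n) (n × n) ℂ, IsState ρ ∧
    x = (1 / 2) * traceNorm (idTensor N ρ - idTensor M ρ)}

/-- Complete positivity of a linear map on matrices: every finite identity extension
preserves positive semidefiniteness. -/
def IsCP {n m : Type*} [Fintype n] [DecidableEq n] [Fintype m] [DecidableEq m]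
    (Φ : Matrix n n ℂ →ₗ[ℂ] Matrix m m ℂ) : Prop :=
  ∀ (r : ℕ) (M : Matrix (Fin r × n) (Fin r × n) ℂ), M.PosSemidef →
    (idTensor (fun X => Φ X) M).PosSemidef

/-- Trace preservation of a linear map on matrices. -/
def IsTP {n m : Type*} [Fintype n] [Fintype m]
    (Φ : Matrix n n ℂ →ₗ[ℂ] Matrix m m ℂ) : Prop :=
  ∀ X, (Φ X).trace = X.trace

/-- Choi operator of a map on matrices: `Γ^Φ = Σ_{i,j} |i⟩⟨j| ⊗ Φ(|i⟩⟨j|)`. -/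
def choi {n m : Type*} [DecidableEq n]
    (Φ : Matrix n n ℂ → Matrix m m ℂ) : Matrix (n × m) (n × m) ℂ :=
  Matrix.of fun p q => Φ (Matrix.single p.1 q.1 1) p.2 q.2

/-- The swap operator `F = Σ_{i,j} |i⟩⟨j| ⊗ |j⟩⟨i|` on `ℂ^d ⊗ ℂ^d`. -/
def swapOp (d : ℕ) : Matrix (Fin d × Fin d) (Fin d × Fin d) ℂ :=
  Matrix.of fun p q => if p.1 = q.2 ∧ p.2 = q.1 then 1 else 0

/-- The swap channel `S^d(X) = F X F†`. -/
def swapCh (d : ℕ) (X : Matrix (Fin d × Fin d) (Fin d × Fin d) ℂ) :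
    Matrix (Fin d × Fin d) (Fin d × Fin d) ℂ :=
  swapOp d * X * (swapOp d)ᴴ

/-- Square root of a positive semidefinite matrix (junk value `0` otherwise). -/
def msqrt {n : Type*} [Fintype n] [DecidableEq n] (X : Matrix n n ℂ) : Matrix n n ℂ :=
  letI := Classical.propDecidable X.PosSemidef
  if h : X.PosSemidef then psdSqrt h else 0

/-- Fidelity `F(ω,τ) = ‖√ω √τ‖₁²`. -/
def fid {n : Type*} [Fintype n] [DecidableEq n] (ω τ : Matrix n n ℂ) : ℝ :=
  (traceNorm (msqrt ω * msqrt τ)) ^ 2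

/-- Channel fidelity: the infimum of output fidelities over bipartite input states. -/
def cFid {n m : Type*} [Fintype n] [DecidableEq n] [Fintype m] [DecidableEq m]
    (N M : Matrix n n ℂ → Matrix m m ℂ) : ℝ :=
  sInf {x : ℝ | ∃ ρ : Matrix (n × n) (n × n) ℂ, IsState ρ ∧
    x = fid (idTensor N ρ) (idTensor M ρ)}

/-- Partial trace over the second (right) factor. -/
def ptrR {a b : Type*} [Fintype b] (X : Matrix (a × b) (a × b) ℂ) : Matrix a a ℂ :=
  Matrix.of fun i j => ∑ k, X (i, k) (j, k)

/-- Unnormalized maximally entangled operator `Γ = |Γ⟩⟨Γ|` on `ℂ^D ⊗ ℂ^D`. -/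
def gamOp (D : ℕ) : Matrix (Fin D × Fin D) (Fin D × Fin D) ℂ :=
  Matrix.of fun p q => if p.1 = p.2 ∧ q.1 = q.2 then 1 else 0

/-- Maximally entangled state `Φ = Γ/D` on `ℂ^D ⊗ ℂ^D`. -/
def phiD (D : ℕ) : Matrix (Fin D × Fin D) (Fin D × Fin D) ℂ :=
  ((D : ℂ))⁻¹ • gamOp D

/-- Partial transpose over Bob's factors `B, B̂, B'` of a matrix on the six factors
`(A ⊗ B) ⊗ (Â ⊗ B̂) ⊗ (A' ⊗ B')`. -/
def ptB6 {A B AH BH A' B' : Type*}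
    (X : Matrix (((A × B) × (AH × BH)) × (A' × B')) (((A × B) × (AH × BH)) × (A' × B')) ℂ) :
    Matrix (((A × B) × (AH × BH)) × (A' × B')) (((A × B) × (AH × BH)) × (A' × B')) ℂ :=
  Matrix.of fun p q =>
    X (((p.1.1.1, q.1.1.2), (p.1.2.1, q.1.2.2)), (p.2.1, q.2.2))
      (((q.1.1.1, p.1.1.2), (q.1.2.1, p.1.2.2)), (q.2.1, p.2.2))

/-- Partial transpose over the factor `B̂` of a matrix on `Â ⊗ B̂`. -/
def ptBh2 {AH BH : Type*} (X : Matrix (AH × BH) (AH × BH) ℂ) : Matrix (AH × BH) (AH × BH) ℂ :=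
  Matrix.of fun g g' => X (g.1, g'.2) (g'.1, g.2)

/-- Contraction `Tr_{ÂB̂}[(T_{ÂB̂}(ρ) ⊗ I) P]` of a six-factor operator with a resource state,
yielding the Choi operator of the induced channel `ω ↦ P(ω ⊗ ρ)`. -/
def contractRes {A B AH BH A' B' : Type*} [Fintype AH] [Fintype BH]
    (ρ : Matrix (AH × BH) (AH × BH) ℂ)
    (P : Matrix (((A × B) × (AH × BH)) × (A' × B')) (((A × B) × (AH × BH)) × (A' × B')) ℂ) :
    Matrix ((A × B) × (A' × B')) ((A × B) × (A' × B')) ℂ :=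
  Matrix.of fun p q => ∑ h, ∑ h', ρ h h' * P ((p.1, h), p.2) ((q.1, h'), q.2)


/-- The six-factor operator `E1_{AB'} ⊗ E1_{BA'} ⊗ K + E1_{AB'} ⊗ E2_{BA'} ⊗ L
+ E2_{AB'} ⊗ E1_{BA'} ⊗ M + E2_{AB'} ⊗ E2_{BA'} ⊗ N` on the factors
`A, B, Â, B̂, A', B'` (with `E1, E2` placed on the indicated pairs of factors). -/
def bigOp (d : ℕ) {AH BH : Type*} (E1 E2 : Matrix (Fin d × Fin d) (Fin d × Fin d) ℂ)
    (K L M N : Matrix (AH × BH) (AH × BH) ℂ) :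
    Matrix (((Fin d × Fin d) × (AH × BH)) × (Fin d × Fin d))
      (((Fin d × Fin d) × (AH × BH)) × (Fin d × Fin d)) ℂ :=
  Matrix.of fun r c =>
    E1 (r.1.1.1, r.2.2) (c.1.1.1, c.2.2) * E1 (r.1.1.2, r.2.1) (c.1.1.2, c.2.1) * K r.1.2 c.1.2
    + E1 (r.1.1.1, r.2.2) (c.1.1.1, c.2.2) * E2 (r.1.1.2, r.2.1) (c.1.1.2, c.2.1) * L r.1.2 c.1.2
    + E2 (r.1.1.1, r.2.2) (c.1.1.1, c.2.2) * E1 (r.1.1.2, r.2.1) (c.1.1.2, c.2.1) * M r.1.2 c.1.2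
    + E2 (r.1.1.1, r.2.2) (c.1.1.1, c.2.2) * E2 (r.1.1.2, r.2.1) (c.1.1.2, c.2.1) * N r.1.2 c.1.2

/-! Partial transposition turns `Γ` into the swap operator `F = P₊ - P₋` and
`(d·I - Γ)/(d² - 1)` into `(d·I - F)/(d² - 1) = P₊/(d + 1) + P₋/(d - 1)`, where `P₊`, `P₋` are the
projections onto the symmetric and antisymmetric subspaces of `ℂ^d ⊗ ℂ^d`. After regrouping the
factors as `(A B') (B A') (Â B̂)`, the operator `T_{BB̂B'}(P)` is therefore
`∑_{s,t = ±} P_s ⊗ P_t ⊗ T_B̂(X_{st})`, with the four operators of the conditions as `X_{st}`.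
Testing against `u ⊗ v ⊗ w` with `u, v` in the ranges of the projections separates the blocks. -/

-- A quadratic form with real values is Hermitian, by polarization.
theorem Matrix.posSemidef_of_forall_dotProduct_mulVec_nonneg {n : Type*} [Fintype n]
    {A : Matrix n n ℂ} (h : ∀ x, 0 ≤ star x ⬝ᵥ A *ᵥ x) : A.PosSemidef := by
  classical
  rw [← isPositive_toEuclideanLin_iff, LinearMap.isPositive_iff_complex]
  intro x
  have hz : 0 ≤ inner ℂ x (A.toEuclideanLin x) := by
    simpa [EuclideanSpace.inner_eq_star_dotProduct, dotProduct_comm] using h x.ofLp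
  obtain ⟨hre, him⟩ := RCLike.nonneg_iff.mp hz
  rw [← inner_conj_symm, RCLike.conj_eq_iff_im.mpr him]
  exact ⟨RCLike.conj_eq_iff_re.mp (RCLike.conj_eq_iff_im.mpr him), hre⟩

section Kronecker

variable {ι κ : Type*}

theorem Matrix.sub_kronecker {α l m : Type*} [Ring α] (A₁ A₂ : Matrix ι κ α)
    (B : Matrix l m α) : (A₁ - A₂) ⊗ₖ B = A₁ ⊗ₖ B - A₂ ⊗ₖ B := by
  ext
  simp [sub_mul]

theorem Matrix.kronecker_sub {α l m : Type*} [Ring α] (A : Matrix ι κ α)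
    (B₁ B₂ : Matrix l m α) : A ⊗ₖ (B₁ - B₂) = A ⊗ₖ B₁ - A ⊗ₖ B₂ := by
  ext
  simp [mul_sub]

variable [Fintype ι] [Fintype κ]

theorem Matrix.star_dotProduct_kronecker_mulVec_prod {R : Type*} [CommSemiring R] [StarRing R]
    (A : Matrix ι ι R) (B : Matrix κ κ R) (u : ι → R) (w : κ → R) :
    star (fun p : ι × κ => u p.1 * w p.2) ⬝ᵥ (A ⊗ₖ B) *ᵥ (fun p => u p.1 * w p.2)
      = (star u ⬝ᵥ A *ᵥ u) * (star w ⬝ᵥ B *ᵥ w) := by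
  simp only [dotProduct, mulVec, kroneckerMap_apply, Pi.star_apply, star_mul',
    Fintype.sum_prod_type, Finset.mul_sum, Finset.sum_mul]
  rw [Finset.sum_comm]
  refine Finset.sum_congr rfl fun k _ => ?_
  conv_rhs => rw [Finset.sum_comm]
  refine Finset.sum_congr rfl fun i _ => ?_
  rw [Finset.sum_comm]
  refine Finset.sum_congr rfl fun l _ => Finset.sum_congr rfl fun j _ => ?_
  ring

theorem Matrix.PosSemidef.of_kronecker_add_kronecker {P Q : Matrix ι ι ℂ} {X Y : Matrix κ κ ℂ}
    {u : ι → ℂ} (hPu : 0 < star u ⬝ᵥ P *ᵥ u) (hQu : star u ⬝ᵥ Q *ᵥ u = 0)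
    (h : (P ⊗ₖ X + Q ⊗ₖ Y).PosSemidef) : X.PosSemidef := by
  refine posSemidef_of_forall_dotProduct_mulVec_nonneg fun w => ?_
  have hw := h.dotProduct_mulVec_nonneg (fun p => u p.1 * w p.2)
  rw [add_mulVec, dotProduct_add, star_dotProduct_kronecker_mulVec_prod,
    star_dotProduct_kronecker_mulVec_prod, hQu, zero_mul, add_zero] at hw
  simpa [hPu.ne'] using mul_nonneg (inv_pos.mpr hPu).le hw

end Kronecker

section Swap

variable {d : ℕ}

theorem swapOp_mulVec (x : Fin d × Fin d → ℂ) : swapOp d *ᵥ x = x ∘ Prod.swap := by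
  funext p
  simp [mulVec, dotProduct, swapOp, Fintype.sum_prod_type, ite_and, Prod.swap]

theorem swapOp_mul_self : swapOp d * swapOp d = 1 := by
  ext ⟨i, j⟩ ⟨k, l⟩
  simp [mul_apply, swapOp, Fintype.sum_prod_type, ite_and, one_apply, Prod.ext_iff]

theorem transpose_swapOp : (swapOp d)ᵀ = swapOp d := by
  ext ⟨i, j⟩ ⟨k, l⟩
  simp [swapOp, and_comm, eq_comm]

theorem conjTranspose_swapOp : (swapOp d)ᴴ = swapOp d := by
  rw [conjTranspose, transpose_swapOp]
  ext p q
  simp [swapOp]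

def symProj (d : ℕ) : Matrix (Fin d × Fin d) (Fin d × Fin d) ℂ := (2 : ℂ)⁻¹ • (1 + swapOp d)

def antisymProj (d : ℕ) : Matrix (Fin d × Fin d) (Fin d × Fin d) ℂ := 1 - symProj d

theorem isStarProjection_symProj : IsStarProjection (symProj d) where
  isIdempotentElem := by
    simp only [IsIdempotentElem, symProj, smul_mul_smul_comm, add_mul, mul_add, one_mul, mul_one,
      swapOp_mul_self]
    module
  isSelfAdjoint := by
    simp [IsSelfAdjoint, symProj, star_eq_conjTranspose, conjTranspose_swapOp]

open scoped MatrixOrder in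
theorem posSemidef_symProj : (symProj d).PosSemidef :=
  isStarProjection_symProj.nonneg.posSemidef

open scoped MatrixOrder in
theorem posSemidef_antisymProj : (antisymProj d).PosSemidef :=
  isStarProjection_symProj.one_sub.nonneg.posSemidef

theorem symProj_mulVec_of_swapOp_mulVec_eq {x : Fin d × Fin d → ℂ} (hx : swapOp d *ᵥ x = x) :
    symProj d *ᵥ x = x := by
  rw [symProj, smul_mulVec, add_mulVec, one_mulVec, hx]
  module

theorem symProj_mulVec_of_swapOp_mulVec_eq_neg {x : Fin d × Fin d → ℂ}
    (hx : swapOp d *ᵥ x = -x) : symProj d *ᵥ x = 0 := by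
  rw [symProj, smul_mulVec, add_mulVec, one_mulVec, hx, add_neg_cancel, smul_zero]

theorem swapOp_eq_symProj_sub_antisymProj : swapOp d = symProj d - antisymProj d := by
  rw [antisymProj, symProj]
  module

theorem inv_smul_natCast_smul_one_sub_swapOp (hd : d ≠ 1) :
    ((d : ℂ) ^ 2 - 1)⁻¹ • ((d : ℂ) • 1 - swapOp d)
      = ((d : ℂ) + 1)⁻¹ • symProj d + ((d : ℂ) - 1)⁻¹ • antisymProj d := by
  have h1 : (d : ℂ) - 1 ≠ 0 := sub_ne_zero.mpr (by exact_mod_cast hd)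
  have h2 : (d : ℂ) + 1 ≠ 0 := by norm_cast
  have h3 : (d : ℂ) ^ 2 - 1 ≠ 0 := by
    rw [show (d : ℂ) ^ 2 - 1 = ((d : ℂ) - 1) * ((d : ℂ) + 1) by ring]
    exact mul_ne_zero h1 h2
  rw [antisymProj, symProj]
  match_scalars <;> field_simp <;> ring

theorem symProj_kronecker_add_antisymProj_kronecker_posSemidef_iff (hd : 2 ≤ d)
    {κ : Type*} [Fintype κ] {X Y : Matrix κ κ ℂ} :
    (symProj d ⊗ₖ X + antisymProj d ⊗ₖ Y).PosSemidef ↔ X.PosSemidef ∧ Y.PosSemidef := by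
  have : Nontrivial (Fin d) := Fin.nontrivial_iff_two_le.mpr hd
  obtain ⟨i, j, hij⟩ := exists_pair_ne (Fin d)
  refine ⟨fun h => ⟨?_, ?_⟩, fun ⟨hX, hY⟩ =>
    (posSemidef_symProj.kronecker hX).add (posSemidef_antisymProj.kronecker hY)⟩
  · set u : Fin d × Fin d → ℂ := Pi.single (i, i) 1
    have hu : symProj d *ᵥ u = u := symProj_mulVec_of_swapOp_mulVec_eq <| by
      rw [swapOp_mulVec]
      ext ⟨a, b⟩
      simp [u, Pi.single_apply, and_comm]
    refine h.of_kronecker_add_kronecker (u := u) ?_ ?_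
    · rw [hu]
      exact dotProduct_star_self_pos_iff.mpr (by simp [u])
    · rw [antisymProj, sub_mulVec, one_mulVec, hu, sub_self, dotProduct_zero]
  · set v : Fin d × Fin d → ℂ := Pi.single (i, j) 1 - Pi.single (j, i) 1
    have hv : symProj d *ᵥ v = 0 := symProj_mulVec_of_swapOp_mulVec_eq_neg <| by
      rw [swapOp_mulVec]
      ext ⟨a, b⟩
      simp [v, Pi.single_apply, and_comm]
    refine (add_comm (symProj d ⊗ₖ X) _ ▸ h).of_kronecker_add_kronecker (u := v) ?_ ?_
    · rw [antisymProj, sub_mulVec, one_mulVec, hv, sub_zero]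
      refine dotProduct_star_self_pos_iff.mpr fun hv0 => ?_
      simpa [v, Pi.single_apply, hij] using congrFun hv0 (i, j)
    · rw [hv, dotProduct_zero]

theorem swapOp_kronecker_sum_eq_symProj_kronecker_sum (hd : d ≠ 1) {κ : Type*}
    (K L M N : Matrix κ κ ℂ) :
    swapOp d ⊗ₖ (swapOp d ⊗ₖ K)
      + swapOp d ⊗ₖ ((((d : ℂ) ^ 2 - 1)⁻¹ • ((d : ℂ) • 1 - swapOp d)) ⊗ₖ L)
      + (((d : ℂ) ^ 2 - 1)⁻¹ • ((d : ℂ) • 1 - swapOp d)) ⊗ₖ (swapOp d ⊗ₖ M)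
      + (((d : ℂ) ^ 2 - 1)⁻¹ • ((d : ℂ) • 1 - swapOp d)) ⊗ₖ
          ((((d : ℂ) ^ 2 - 1)⁻¹ • ((d : ℂ) • 1 - swapOp d)) ⊗ₖ N)
    = symProj d ⊗ₖ (symProj d ⊗ₖ
          (K + ((d : ℂ) + 1)⁻¹ • L + ((d : ℂ) + 1)⁻¹ • M + (((d : ℂ) + 1) ^ 2)⁻¹ • N)
        + antisymProj d ⊗ₖ
          (((d : ℂ) - 1)⁻¹ • (L + ((d : ℂ) + 1)⁻¹ • N) - (K + ((d : ℂ) + 1)⁻¹ • M)))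
      + antisymProj d ⊗ₖ (symProj d ⊗ₖ
          (((d : ℂ) - 1)⁻¹ • (M + ((d : ℂ) + 1)⁻¹ • N) - (K + ((d : ℂ) + 1)⁻¹ • L))
        + antisymProj d ⊗ₖ (K + (((d : ℂ) - 1) ^ 2)⁻¹ • N - ((d : ℂ) - 1)⁻¹ • (L + M))) := by
  rw [inv_smul_natCast_smul_one_sub_swapOp hd, swapOp_eq_symProj_sub_antisymProj]
  simp only [add_kronecker, kronecker_add, sub_kronecker, kronecker_sub, smul_kronecker,
    kronecker_smul, smul_add, smul_sub]
  match_scalars <;> field_simp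

end Swap

section PartialTranspose

variable {AH BH : Type*}

@[simp]
theorem ptBh2_add (X Y : Matrix (AH × BH) (AH × BH) ℂ) : ptBh2 (X + Y) = ptBh2 X + ptBh2 Y := rfl

@[simp]
theorem ptBh2_sub (X Y : Matrix (AH × BH) (AH × BH) ℂ) : ptBh2 (X - Y) = ptBh2 X - ptBh2 Y := rfl

@[simp]
theorem ptBh2_smul (c : ℂ) (X : Matrix (AH × BH) (AH × BH) ℂ) : ptBh2 (c • X) = c • ptBh2 X :=
  rfl

@[simp]
theorem ptBh2_one [DecidableEq AH] [DecidableEq BH] :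
    ptBh2 (1 : Matrix (AH × BH) (AH × BH) ℂ) = 1 := by
  ext ⟨a, b⟩ ⟨a', b'⟩
  simp [ptBh2, one_apply, Prod.ext_iff, eq_comm (a := b')]

theorem ptBh2_gamOp (d : ℕ) : ptBh2 (gamOp d) = swapOp d := by
  ext ⟨a, b⟩ ⟨a', b'⟩
  simp [ptBh2, gamOp, swapOp, eq_comm]

end PartialTranspose

-- Brings together the pairs `(A, B')` and `(B, A')` on which `bigOp` places its operators.
def pairFactorsEquiv (A B A' B' H : Type*) :
    ((A × B) × H) × (A' × B') ≃ (A × B') × ((B × A') × H) where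
  toFun r := ((r.1.1.1, r.2.2), ((r.1.1.2, r.2.1), r.1.2))
  invFun x := (((x.1.1, x.2.1.1), x.2.2), (x.2.1.2, x.1.2))
  left_inv _ := rfl
  right_inv _ := rfl

-- On the pair `(B, A')` the transposed factor is the first one, whence `(ptBh2 E)ᵀ`.
theorem ptB6_bigOp (d : ℕ) {AH BH : Type*} (E₁ E₂ : Matrix (Fin d × Fin d) (Fin d × Fin d) ℂ)
    (K L M N : Matrix (AH × BH) (AH × BH) ℂ) :
    ptB6 (bigOp d E₁ E₂ K L M N) =
      (ptBh2 E₁ ⊗ₖ ((ptBh2 E₁)ᵀ ⊗ₖ ptBh2 K) + ptBh2 E₁ ⊗ₖ ((ptBh2 E₂)ᵀ ⊗ₖ ptBh2 L)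
        + ptBh2 E₂ ⊗ₖ ((ptBh2 E₁)ᵀ ⊗ₖ ptBh2 M) + ptBh2 E₂ ⊗ₖ ((ptBh2 E₂)ᵀ ⊗ₖ ptBh2 N)).submatrix
        (pairFactorsEquiv _ _ _ _ _) (pairFactorsEquiv _ _ _ _ _) := by
  ext r c
  simp only [ptB6, bigOp, ptBh2, pairFactorsEquiv, of_apply, submatrix_apply, Matrix.add_apply,
    kroneckerMap_apply, transpose_apply, Equiv.coe_fn_mk]
  ring

theorem stmt9_general (d : ℕ) (hd : 2 ≤ d) {AH BH : Type}
    [Fintype AH] [Fintype BH]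
    (K L M N : Matrix (AH × BH) (AH × BH) ℂ) :
    (ptB6 (bigOp d (gamOp d) ((((d : ℂ)) ^ 2 - 1)⁻¹ • ((d : ℂ) • 1 - gamOp d)) K L M N)).PosSemidef
      ↔
    ((ptBh2 (K + ((d : ℂ) + 1)⁻¹ • L + ((d : ℂ) + 1)⁻¹ • M +
        (((d : ℂ) + 1) ^ 2)⁻¹ • N)).PosSemidef ∧
      (((d : ℂ) - 1)⁻¹ • ptBh2 (L + ((d : ℂ) + 1)⁻¹ • N) -
        ptBh2 (K + ((d : ℂ) + 1)⁻¹ • M)).PosSemidef ∧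
      (((d : ℂ) - 1)⁻¹ • ptBh2 (M + ((d : ℂ) + 1)⁻¹ • N) -
        ptBh2 (K + ((d : ℂ) + 1)⁻¹ • L)).PosSemidef ∧
      (ptBh2 (K + (((d : ℂ) - 1) ^ 2)⁻¹ • N) -
        ((d : ℂ) - 1)⁻¹ • ptBh2 (L + M)).PosSemidef) := by
  rw [ptB6_bigOp, posSemidef_submatrix_equiv]
  simp only [ptBh2_smul, ptBh2_sub, ptBh2_add, ptBh2_one, ptBh2_gamOp, transpose_smul,
    transpose_sub, transpose_one, transpose_swapOp]
  rw [swapOp_kronecker_sum_eq_symProj_kronecker_sum (by omega),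
    symProj_kronecker_add_antisymProj_kronecker_posSemidef_iff hd,
    symProj_kronecker_add_antisymProj_kronecker_posSemidef_iff hd,
    symProj_kronecker_add_antisymProj_kronecker_posSemidef_iff hd, and_assoc]

/-- the partial transpose over Bob's factors of the symmetrized six-factor
operator built from `Γ` and `(d·I − Γ)/(d² − 1)` is positive semidefinite if and only if
the four stated operator inequalities hold. -/
theorem stmt9 (d : ℕ) (hd : 2 ≤ d) {AH BH : Type}
    [Fintype AH] [DecidableEq AH] [Fintype BH] [DecidableEq BH]
    (K L M N : Matrix (AH × BH) (AH × BH) ℂ)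
    (hK : K.IsHermitian) (hL : L.IsHermitian) (hM : M.IsHermitian) (hN : N.IsHermitian) :
    (ptB6 (bigOp d (gamOp d) ((((d : ℂ)) ^ 2 - 1)⁻¹ • ((d : ℂ) • 1 - gamOp d)) K L M N)).PosSemidef
      ↔
    ((ptBh2 (K + ((d : ℂ) + 1)⁻¹ • L + ((d : ℂ) + 1)⁻¹ • M +
        (((d : ℂ) + 1) ^ 2)⁻¹ • N)).PosSemidef ∧
      (((d : ℂ) - 1)⁻¹ • ptBh2 (L + ((d : ℂ) + 1)⁻¹ • N) -
        ptBh2 (K + ((d : ℂ) + 1)⁻¹ • M)).PosSemidef ∧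
      (((d : ℂ) - 1)⁻¹ • ptBh2 (M + ((d : ℂ) + 1)⁻¹ • N) -
        ptBh2 (K + ((d : ℂ) + 1)⁻¹ • L)).PosSemidef ∧
      (ptBh2 (K + (((d : ℂ) - 1) ^ 2)⁻¹ • N) -
        ((d : ℂ) - 1)⁻¹ • ptBh2 (L + M)).PosSemidef) :=
  stmt9_general d hd K L M N
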